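/- Under the same hypotheses, the chain map $\Phi_\#$ induces an isomorphism in homology: $H_k(\mathcal{C}_0(B_*), \partial_{[1]}) \cong H_k(\mathrm{CB}_*, \boldsymbol{\partial}_*)$ for every $k$. In particular, the Morse-Smale-Witten chain complex of a Morse-Smale function is quasi-isomorphic to its Morse-Bott-Smale chain complex. -/

import Mathlib

open DirectSum

/-!
STATEMENT 17: The Morse--Smale--Witten chain complex is quasi-isomorphic to the
Morse--Bott--Smale chain complex: in every degree `k`,
`H_k(𝒞_0(B_*), ∂_{[1]}) ≅ H_k(CB_*, 𝛛_*)`.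

Setup: groups `C p i = 𝒞_p(B_i)` (trivial for `p < 0`, `i < 0`, or `i > m`) with
maps `∂_{[j]}` of bidegree `(j-1, -j)`, vanishing for `j < 0` or `j > m`,
satisfying `∑_{q=0}^j ∂_{[q]} ∘ ∂_{[j-q]} = 0`, with `∂_{[0]}` an isomorphism in
positive even degrees and zero otherwise (the Morse--Smale situation).  The
Morse complex is `(𝒞_0(B_*), ∂_{[1]})`; the total complex is
`CB_k = ⨁_i 𝒞_{k-i}(B_i)` with total differential `𝛛_k = ⊕_{i,j} ∂_{[j]}`.
-/

/-- Transport along equalities of the two degrees. -/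
def castC {C : ℤ → ℤ → Type u} [∀ p i, AddCommGroup (C p i)] {a a' b b' : ℤ}
    (h1 : a = a') (h2 : b = b') : C a b ≃+ C a' b' := by
  subst h1; subst h2; exact AddEquiv.refl _

section

variable {C : ℤ → ℤ → Type u} [∀ p i, AddCommGroup (C p i)]

/-- The degree-`k` part `CB_k = ⨁_i 𝒞_{k-i}(B_i)` of the total complex. -/
abbrev TotalCB (C : ℤ → ℤ → Type u) [∀ p i, AddCommGroup (C p i)] (k : ℤ) :
    Type u :=
  ⨁ i : ℤ, C (k - i) i

/-- Transport along an equality of total degrees. -/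
def castCB {a b : ℤ} (h : a = b) : TotalCB C a ≃+ TotalCB C b := by
  subst h; exact AddEquiv.refl _

/-- The total differential `𝛛_k : CB_k → CB_{k-1}`. -/
noncomputable def totalBoundary (m : ℤ)
    (d : ∀ j p i : ℤ, C p i →+ C (p + j - 1) (i - j)) (k : ℤ) :
    TotalCB C k →+ TotalCB C (k - 1) :=
  DirectSum.toAddMonoid fun i =>
    ∑ j ∈ Finset.Icc (0 : ℤ) m,
      (DirectSum.of (fun i' : ℤ => C (k - 1 - i') i') (i - j)).comp
        ((castC (C := C) (by ring) rfl).toAddMonoidHom.comp (d j (k - i) i))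

/-- The Morse differential `∂_{[1]} : 𝒞_0(B_i) → 𝒞_0(B_{i-1})`. -/
noncomputable def morseBoundary
    (d : ∀ j p i : ℤ, C p i →+ C (p + j - 1) (i - j)) (i : ℤ) :
    C 0 i →+ C 0 (i - 1) :=
  (castC (C := C) (by ring) rfl).toAddMonoidHom.comp (d 1 0 i)

/-- Homology of the Morse complex `(𝒞_0(B_*), ∂_{[1]})` in degree `k`. -/
abbrev morseHomology (d : ∀ j p i : ℤ, C p i →+ C (p + j - 1) (i - j)) (k : ℤ) :
    Type u :=
  (morseBoundary d k).ker ⧸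
    ((((castC (C := C) rfl (show k + 1 - 1 = k by ring)).toAddMonoidHom.comp
        (morseBoundary d (k + 1))).range).addSubgroupOf (morseBoundary d k).ker)

/-- Homology of the total (Morse--Bott--Smale) complex in degree `k`. -/
abbrev totalHomology (m : ℤ)
    (d : ∀ j p i : ℤ, C p i →+ C (p + j - 1) (i - j)) (k : ℤ) : Type u :=
  (totalBoundary m d k).ker ⧸
    ((((castCB (C := C) (show k + 1 - 1 = k by ring)).toAddMonoidHom.comp
        (totalBoundary m d (k + 1))).range).addSubgroupOf
      (totalBoundary m d k).ker)

end

/-!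
Each column `(𝒞_*(B_i), ∂_{[0]})` of the double complex is acyclic away from its bottom row:
`∂_{[0]}` maps every positive even row isomorphically onto the odd row below it, so inverting it
there gives a contraction `h` with `∂_{[0]} h + h ∂_{[0]} = 1 - ι π`, where `ι` and `π` include and
project the bottom row `𝒞_0(B_*)`. The remaining part `B` of the total differential strictly lowers
the column index, so `h B` is nilpotent and `Φ = (1 + h B)⁻¹ ι` is defined.

The key observation is that a cycle `y` of the total complex with `h y = 0` is determined by its
bottom row: `y + h B y = ι π y`, i.e. `y = Φ (π y)`. Applied to `𝛛 Φ c` it shows that `Φ` is a chain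
map; applied to `x - 𝛛 u` with `u = (1 + h B)⁻¹ h x` it shows that every cycle `x` is homologous
to `Φ (π x)`. Since moreover `π Φ = 1` and `π 𝛛 = ∂_{[1]} π`, the maps `Φ` and `π` induce inverse
isomorphisms in homology.
-/

section Homology

variable {M₂ M₁ M₀ X₂ X₁ X₀ : Type*} [AddCommGroup M₂] [AddCommGroup M₁] [AddCommGroup M₀]
  [AddCommGroup X₂] [AddCommGroup X₁] [AddCommGroup X₀]

theorem nonempty_addEquiv_homology_of_retract
    (dM₂ : M₂ →+ M₁) (dM₁ : M₁ →+ M₀) (dX₂ : X₂ →+ X₁) (dX₁ : X₁ →+ X₀)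
    (φ : M₁ →+ X₁) (π : X₁ →+ M₁)
    (hφ_cycle : ∀ c, dM₁ c = 0 → dX₁ (φ c) = 0) (hφ_boundary : ∀ e, φ (dM₂ e) ∈ dX₂.range)
    (hπ_cycle : ∀ x, dX₁ x = 0 → dM₁ (π x) = 0) (hπ_boundary : ∀ y, π (dX₂ y) ∈ dM₂.range)
    (hπφ : ∀ c, π (φ c) = c) (hφπ : ∀ x, dX₁ x = 0 → x - φ (π x) ∈ dX₂.range) :
    Nonempty (dM₁.ker ⧸ dM₂.range.addSubgroupOf dM₁.ker ≃+
      dX₁.ker ⧸ dX₂.range.addSubgroupOf dX₁.ker) := by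
  let φH := QuotientAddGroup.map (dM₂.range.addSubgroupOf dM₁.ker)
    (dX₂.range.addSubgroupOf dX₁.ker)
    ((φ.comp dM₁.ker.subtype).codRestrict _ fun c => hφ_cycle c c.2)
    (fun c hc => by
      obtain ⟨e, he⟩ := AddSubgroup.mem_addSubgroupOf.mp hc
      rw [AddSubgroup.mem_comap, AddSubgroup.mem_addSubgroupOf]
      show φ c ∈ dX₂.range
      exact he ▸ hφ_boundary e)
  let πH := QuotientAddGroup.map (dX₂.range.addSubgroupOf dX₁.ker)
    (dM₂.range.addSubgroupOf dM₁.ker)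
    ((π.comp dX₁.ker.subtype).codRestrict _ fun x => hπ_cycle x x.2)
    (fun x hx => by
      obtain ⟨y, hy⟩ := AddSubgroup.mem_addSubgroupOf.mp hx
      rw [AddSubgroup.mem_comap, AddSubgroup.mem_addSubgroupOf]
      show π x ∈ dM₂.range
      exact hy ▸ hπ_boundary y)
  refine ⟨AddMonoidHom.toAddEquiv φH πH ?_ ?_⟩
  · refine QuotientAddGroup.addMonoidHom_ext _ (AddMonoidHom.ext fun c => ?_)
    exact congrArg QuotientAddGroup.mk (Subtype.ext (hπφ c))
  · refine QuotientAddGroup.addMonoidHom_ext _ (AddMonoidHom.ext fun x => ?_)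
    show QuotientAddGroup.mk _ = QuotientAddGroup.mk x
    rw [QuotientAddGroup.eq_iff_sub_mem, AddSubgroup.mem_addSubgroupOf, ← neg_mem_iff,
      AddSubgroup.coe_sub, neg_sub]
    exact hφπ x x.2

end Homology

theorem AddMonoid.End.isNilpotent_of_filtration {G : Type*} [AddCommMonoid G]
    (f : AddMonoid.End G) (F : ℕ → AddSubmonoid G) (N : ℕ) (h0 : F 0 = ⊤)
    (hf : ∀ n, F n ≤ (F (n + 1)).comap f) (hN : F N = ⊥) : IsNilpotent f := by
  have key : ∀ n x, (f ^ n) x ∈ F n := by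
    intro n
    induction n with
    | zero => simp [h0]
    | succ n ih => intro x; rw [pow_succ']; exact hf n (ih x)
  refine ⟨N, AddMonoidHom.ext fun x => ?_⟩
  have := key N x
  rwa [hN, AddSubmonoid.mem_bot] at this

theorem Finset.sum_Icc_sum_Icc_eq_zero_of_antidiagonal {G : Type*} [AddCommMonoid G] {m : ℤ}
    (F : ℤ → ℤ → G) (hF : ∀ j q, (m < j ∨ m < q) → F j q = 0)
    (hanti : ∀ t, ∑ q ∈ Finset.Icc 0 t, F (t - q) q = 0) :
    ∑ j ∈ Finset.Icc 0 m, ∑ q ∈ Finset.Icc 0 m, F j q = 0 := by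
  calc ∑ j ∈ Finset.Icc 0 m, ∑ q ∈ Finset.Icc 0 m, F j q
      = ∑ x ∈ Finset.Icc 0 m ×ˢ Finset.Icc 0 m, F x.1 x.2 := (Finset.sum_product' ..).symm
    _ = ∑ y ∈ (Finset.Icc 0 (2 * m)).sigma (fun t => Finset.Icc 0 t), F (y.1 - y.2) y.2 := by
      refine Finset.sum_bij_ne_zero (fun x _ _ => ⟨x.1 + x.2, x.2⟩) ?_ ?_ ?_ ?_
      · intro x hx _
        simp only [Finset.mem_product, Finset.mem_sigma, Finset.mem_Icc] at hx ⊢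
        omega
      · intro x _ _ y _ _ h
        simp only [Sigma.mk.injEq, heq_eq_eq] at h
        exact Prod.ext (by omega) h.2
      · rintro ⟨t, q⟩ hy hne
        simp only [Finset.mem_sigma, Finset.mem_Icc] at hy
        have hle : t - q ≤ m ∧ q ≤ m := by
          by_contra h
          exact hne (hF (t - q) q (by omega))
        refine ⟨(t - q, q), ?_, by simpa using hne, by simp⟩
        simp only [Finset.mem_product, Finset.mem_Icc]
        omega
      · intro x _ _
        simp
    _ = ∑ t ∈ Finset.Icc 0 (2 * m), ∑ q ∈ Finset.Icc 0 t, F (t - q) q := Finset.sum_sigma ..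
    _ = 0 := Finset.sum_eq_zero fun t _ => hanti t

namespace MorseBott

variable {C : ℤ → ℤ → Type u} [∀ p i, AddCommGroup (C p i)]

@[simp]
theorem castC_self {a b : ℤ} (h₁ : a = a) (h₂ : b = b) (x : C a b) : castC h₁ h₂ x = x := rfl

@[simp]
theorem castC_castC {a a' a'' b b' b'' : ℤ} (h₁ : a = a') (h₂ : b = b') (h₁' : a' = a'')
    (h₂' : b' = b'') (x : C a b) :
    castC h₁' h₂' (castC h₁ h₂ x) = castC (h₁.trans h₁') (h₂.trans h₂') x := by
  subst h₁ h₂ h₁' h₂'; rfl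

abbrev ofCol (a i : ℤ) : C (a - i) i →+ TotalCB C a := DirectSum.of (fun i => C (a - i) i) i

theorem ofCol_castC {a i i' : ℤ} (h : i = i') (h' : a - i = a - i') (x : C (a - i) i) :
    ofCol a i' (castC h' h x) = ofCol a i x := by
  subst h; rfl

theorem castCB_ofCol {a b : ℤ} (h : a = b) (i : ℤ) (h' : a - i = b - i) (x : C (a - i) i) :
    castCB h (ofCol a i x) = ofCol b i (castC h' rfl x) := by
  subst h; rfl

/-! Operators between the degrees of the total complex are indexed by their target degree `c`,
so that composites such as `totalD c ∘ totalD (c + 1)` or `contraction c ∘ horizD c` typecheck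
without transport along `c + 1 - 1 = c`. -/

variable (d : ∀ j p i : ℤ, C p i →+ C (p + j - 1) (i - j)) (m : ℤ)

def dTo (j : ℤ) {p i p' i' : ℤ} (h₁ : p + j - 1 = p') (h₂ : i - j = i') : C p i →+ C p' i' :=
  (castC h₁ h₂).toAddMonoidHom.comp (d j p i)

open Classical in
noncomputable def d0Inv (i : ℤ) {p p' : ℤ} (h : p + 1 = p') : C p i →+ C p' i :=
  if hb : Function.Bijective (d 0 p' i) then
    (AddEquiv.ofBijective (d 0 p' i) hb).symm.toAddMonoidHom.comp
      (castC (by omega) (by ring)).toAddMonoidHom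
  else 0

noncomputable def vertD (c : ℤ) : TotalCB C (c + 1) →+ TotalCB C c :=
  DirectSum.toAddMonoid fun i => (ofCol c i).comp (dTo d 0 (by ring) (by ring))

noncomputable def horizD (c : ℤ) : TotalCB C (c + 1) →+ TotalCB C c :=
  DirectSum.toAddMonoid fun i =>
    ∑ j ∈ Finset.Icc 1 m, (ofCol c (i - j)).comp (dTo d j (by ring) rfl)

noncomputable def totalD (c : ℤ) : TotalCB C (c + 1) →+ TotalCB C c :=
  (castCB (by ring)).toAddMonoidHom.comp (totalBoundary m d (c + 1))

noncomputable def morseD (c : ℤ) : C 0 (c + 1) →+ C 0 c :=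
  (castC rfl (by ring)).toAddMonoidHom.comp (morseBoundary d (c + 1))

noncomputable def contraction (c : ℤ) : TotalCB C c →+ TotalCB C (c + 1) :=
  DirectSum.toAddMonoid fun i => (ofCol (c + 1) i).comp (d0Inv d i (by ring))

noncomputable def contractHoriz (c : ℤ) : AddMonoid.End (TotalCB C (c + 1)) :=
  (contraction d c).comp (horizD d m c)

noncomputable def incl (a : ℤ) : C 0 a →+ TotalCB C a :=
  (ofCol a a).comp (castC (by ring) rfl).toAddMonoidHom

noncomputable def proj (a : ℤ) : TotalCB C a →+ C 0 a :=
  (castC (by ring) rfl).toAddMonoidHom.comp (DFinsupp.evalAddMonoidHom a)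

/-- The map `Φ_#` of the paper. -/
noncomputable def perturbedIncl (c : ℤ) : C 0 (c + 1) →+ TotalCB C (c + 1) :=
  AddMonoidHom.comp (Ring.inverse (1 + contractHoriz d m c) : AddMonoid.End (TotalCB C (c + 1)))
    (incl (c + 1))

def colFiltration (a s : ℤ) : AddSubmonoid (TotalCB C a) :=
  AddSubmonoid.closure {y | ∃ i ≤ s, ∃ x, ofCol a i x = y}

variable {d m}

theorem dTo_apply (j : ℤ) {p i p' i' : ℤ} (h₁ : p + j - 1 = p') (h₂ : i - j = i') (x : C p i) :
    dTo d j h₁ h₂ x = castC h₁ h₂ (d j p i x) := rfl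

theorem d_castC (j : ℤ) {p i P I : ℤ} (hp : p = P) (hi : i = I) (x : C p i) :
    d j P I (castC hp hi x) = castC (by rw [hp]) (by rw [hi]) (d j p i x) := by
  subst hp hi; rfl

@[simp]
theorem castC_dTo (j : ℤ) {p i p' i' p'' i'' : ℤ} (h₁ : p + j - 1 = p') (h₂ : i - j = i')
    (h₁' : p' = p'') (h₂' : i' = i'') (x : C p i) :
    castC h₁' h₂' (dTo d j h₁ h₂ x) = dTo d j (h₁.trans h₁') (h₂.trans h₂') x := by
  simp [dTo_apply]

theorem dTo_castC {j j' p i P I p' i' : ℤ} (hj : j = j') (hp : p = P) (hi : i = I)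
    (h₁ : p + j - 1 = p') (h₂ : i - j = i') (h₁' : P + j' - 1 = p') (h₂' : I - j' = i')
    (x : C p i) : dTo d j' h₁' h₂' (castC hp hi x) = dTo d j h₁ h₂ x := by
  subst hj hp hi; rfl

theorem dTo_eq_zero {j p i p' i' : ℤ} (hd : d j p i = 0) (h₁ : p + j - 1 = p') (h₂ : i - j = i')
    (x : C p i) : dTo d j h₁ h₂ x = 0 := by
  simp [dTo_apply, hd]

theorem d0Inv_eq_zero {i p p' : ℤ} (h : p + 1 = p') (hd : d 0 p' i = 0) (x : C p i) :
    d0Inv d i h x = 0 := by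
  unfold d0Inv
  split_ifs with hb
  · obtain ⟨y, hy⟩ := hb.2 (castC (by omega) (by ring) x)
    rw [hd] at hy
    simp [← hy]
  · rfl

theorem dTo_d0Inv {i p p' : ℤ} (h : p + 1 = p') (hb : Function.Bijective (d 0 p' i))
    (h₁ : p' + 0 - 1 = p) (h₂ : i - 0 = i) (x : C p i) : dTo d 0 h₁ h₂ (d0Inv d i h x) = x := by
  simp [d0Inv, hb, dTo_apply]

theorem d0Inv_dTo {i p p' : ℤ} (h : p' + 1 = p) (hb : Function.Bijective (d 0 p i))
    (h₁ : p + 0 - 1 = p') (h₂ : i - 0 = i) (x : C p i) : d0Inv d i h (dTo d 0 h₁ h₂ x) = x := by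
  simp only [d0Inv, hb, dTo_apply, dif_pos]
  simpa using (AddEquiv.ofBijective _ hb).symm_apply_apply x

theorem vertD_ofCol (c i : ℤ) (x : C (c + 1 - i) i) :
    vertD d c (ofCol (c + 1) i x) = ofCol c i (dTo d 0 (by ring) (by ring) x) :=
  DirectSum.toAddMonoid_of _ _ _

theorem horizD_ofCol (c i : ℤ) (x : C (c + 1 - i) i) :
    horizD d m c (ofCol (c + 1) i x) =
      ∑ j ∈ Finset.Icc 1 m, ofCol c (i - j) (dTo d j (by ring) rfl x) := by
  simp [horizD]

theorem totalD_ofCol (c i : ℤ) (x : C (c + 1 - i) i) :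
    totalD d m c (ofCol (c + 1) i x) =
      ∑ j ∈ Finset.Icc 0 m, ofCol c (i - j) (dTo d j (by ring) rfl x) := by
  simp only [totalD, totalBoundary, AddMonoidHom.comp_apply, DirectSum.toAddMonoid_of,
    AddMonoidHom.finsetSum_apply, map_sum]
  refine Finset.sum_congr rfl fun j _ => ?_
  refine (castCB_ofCol (C := C) (a := c + 1 - 1) (b := c) (by ring) (i - j) (by ring) _).trans ?_
  simp [dTo_apply]

theorem totalD_eq_zero_iff (c : ℤ) (y : TotalCB C (c + 1)) :
    totalD d m c y = 0 ↔ totalBoundary m d (c + 1) y = 0 :=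
  map_eq_zero_iff _ (castCB _).injective

theorem morseD_eq_zero_iff (c : ℤ) (x : C 0 (c + 1)) :
    morseD d c x = 0 ↔ morseBoundary d (c + 1) x = 0 :=
  map_eq_zero_iff _ (castC _ _).injective

theorem morseD_eq_dTo (c : ℤ) (x : C 0 (c + 1)) :
    morseD d c x = dTo d 1 (by ring) (by ring) x := by
  simp [morseD, morseBoundary, dTo]

theorem contraction_ofCol (c i : ℤ) (x : C (c - i) i) :
    contraction d c (ofCol c i x) = ofCol (c + 1) i (d0Inv d i (by ring) x) :=
  DirectSum.toAddMonoid_of _ _ _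

theorem contractHoriz_apply (c : ℤ) (y : TotalCB C (c + 1)) :
    contractHoriz d m c y = contraction d c (horizD d m c y) := rfl

theorem proj_ofCol {a i : ℤ} (h : i = a) (x : C (a - i) i) :
    proj a (ofCol a i x) = castC (by omega) h x := by
  subst h
  exact congrArg (castC _ _) (DirectSum.of_eq_same _ _)

theorem proj_ofCol_of_ne {a i : ℤ} (h : i ≠ a) (x : C (a - i) i) : proj a (ofCol a i x) = 0 := by
  show castC (C := C) (a := a - a) (a' := 0) (by ring) rfl ((ofCol a i x) a) = 0
  rw [DirectSum.of_eq_of_ne _ _ _ h.symm, map_zero]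

@[simp]
theorem proj_incl (a : ℤ) (x : C 0 a) : proj a (incl a x) = x := by
  simp [incl, proj_ofCol rfl]

theorem incl_proj_ofCol {a i : ℤ} (h : i = a) (x : C (a - i) i) :
    incl a (proj a (ofCol a i x)) = ofCol a i x := by
  simp [incl, proj_ofCol h, ofCol_castC h]

theorem colFiltration_le_comap_contractHoriz (c s : ℤ) :
    colFiltration (c + 1) s ≤ (colFiltration (c + 1) (s - 1)).comap (contractHoriz d m c) := by
  refine AddSubmonoid.closure_le.mpr ?_
  rintro _ ⟨i, hi, x, rfl⟩
  rw [SetLike.mem_coe, AddSubmonoid.mem_comap, contractHoriz_apply, horizD_ofCol, map_sum]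
  refine sum_mem fun j hj => ?_
  rw [contraction_ofCol]
  exact AddSubmonoid.subset_closure ⟨i - j, by rw [Finset.mem_Icc] at hj; omega, _, rfl⟩

variable (hm : 0 ≤ m) (htriv : ∀ p i : ℤ, (p < 0 ∨ i < 0 ∨ m < i) → Subsingleton (C p i))
  (hrange : ∀ j p i : ℤ, (j < 0 ∨ m < j) → d j p i = 0)
  (hrel : ∀ (j p i : ℤ) (x : C p i),
      ∑ q ∈ Finset.Icc (0 : ℤ) j,
        castC (C := C) (by ring) (by ring)
          (d q (p + (j - q) - 1) (i - (j - q)) (d (j - q) p i x)) =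
        (0 : C (p + j - 2) (i - j)))
  (hd0 : ∀ p i : ℤ,
      (0 < p ∧ Even p → Function.Bijective (d 0 p i)) ∧
      (¬(0 < p ∧ Even p) → d 0 p i = 0))

include hm in
theorem totalD_eq_vertD_add_horizD (c : ℤ) (y : TotalCB C (c + 1)) :
    totalD d m c y = vertD d c y + horizD d m c y := by
  induction y using DirectSum.induction_on with
  | zero => simp
  | add y z hy hz => rw [map_add, hy, hz, map_add, map_add]; abel
  | of i x =>
    rw [totalD_ofCol, vertD_ofCol, horizD_ofCol, ← Finset.insert_Icc_add_one_left_eq_Icc hm,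
      Finset.sum_insert (by simp), zero_add, ← ofCol_castC (sub_zero i) (by ring), castC_dTo]

include hrange hrel in
theorem totalD_totalD (c : ℤ) (y : TotalCB C (c + 1 + 1)) :
    totalD d m c (totalD d m (c + 1) y) = 0 := by
  induction y using DirectSum.induction_on with
  | zero => simp
  | add y z hy hz => rw [map_add, map_add, hy, hz, add_zero]
  | of i x =>
    rw [totalD_ofCol, map_sum]
    simp only [totalD_ofCol]
    refine Finset.sum_Icc_sum_Icc_eq_zero_of_antidiagonal _ (fun j q hjq => ?_) (fun t => ?_)
    · obtain hj | hq := hjq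
      · rw [dTo_eq_zero (hrange _ _ _ (Or.inr hj)), map_zero, map_zero]
      · rw [dTo_eq_zero (hrange _ _ _ (Or.inr hq)), map_zero]
    have hterm : ∀ q, ofCol c (i - (t - q) - q)
        (dTo d q (by ring) rfl (dTo d (t - q) (p' := c + 1 - (i - (t - q))) (by ring) rfl x)) =
        ofCol c (i - t) (castC (by ring) rfl (castC (C := C) (a' := c + 1 + 1 - i + t - 2)
          (b' := i - t) (by ring) (by ring)
          (d q (c + 1 + 1 - i + (t - q) - 1) (i - (t - q)) (d (t - q) (c + 1 + 1 - i) i x)))) := by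
      intro q
      rw [← ofCol_castC (show i - (t - q) - q = i - t by ring) (by ring)]
      simp only [dTo_apply, d_castC, castC_castC]
    rw [Finset.sum_congr rfl fun q _ => hterm q, ← map_sum, ← map_sum, hrel, map_zero, map_zero]

include hd0 in
theorem d0_eq_zero {p : ℤ} (i : ℤ) (hp : p % 2 = 1 ∨ p ≤ 0) : d 0 p i = 0 :=
  (hd0 p i).2 fun h => by rw [Int.even_iff] at h; omega

include hd0 in
theorem d0_bijective {p : ℤ} (i : ℤ) (hp : 0 < p) (he : p % 2 = 0) :
    Function.Bijective (d 0 p i) :=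
  (hd0 p i).1 ⟨hp, Int.even_iff.mpr he⟩

include hd0 in
theorem contraction_contraction (c : ℤ) (y : TotalCB C c) :
    contraction d (c + 1) (contraction d c y) = 0 := by
  induction y using DirectSum.induction_on with
  | zero => simp
  | add y z hy hz => rw [map_add, map_add, hy, hz, add_zero]
  | of i x =>
    rw [contraction_ofCol, contraction_ofCol]
    rcases Int.emod_two_eq_zero_or_one (c + 1 - i) with he | ho
    · rw [d0Inv_eq_zero _ (d0_eq_zero hd0 i (by omega)), map_zero]
    · rw [d0Inv_eq_zero _ (d0_eq_zero hd0 i (Or.inl ho)), map_zero, map_zero]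

include hd0 in
theorem contraction_incl (a : ℤ) (x : C 0 a) : contraction d a (incl a x) = 0 := by
  rw [incl, AddMonoidHom.comp_apply, contraction_ofCol,
    d0Inv_eq_zero _ (d0_eq_zero hd0 a (by omega)), map_zero]

include hd0 in
theorem proj_contraction (c : ℤ) (y : TotalCB C c) : proj (c + 1) (contraction d c y) = 0 := by
  induction y using DirectSum.induction_on with
  | zero => simp
  | add y z hy hz => rw [map_add, map_add, hy, hz, add_zero]
  | of i x =>
    rw [contraction_ofCol]
    obtain hi | hi := eq_or_ne i (c + 1)
    · rw [d0Inv_eq_zero _ (d0_eq_zero hd0 i (by omega)), map_zero, map_zero]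
    · exact proj_ofCol_of_ne hi _

include htriv hd0 in
theorem dTo_d0Inv_add_d0Inv_dTo {i q r s : ℤ} (hq : q ≠ 0) (hr : q + 1 = r) (hs : s + 1 = q)
    (h₁ : r + 0 - 1 = q) (h₁' : q + 0 - 1 = s) (h₂ : i - 0 = i) (x : C q i) :
    dTo d 0 h₁ h₂ (d0Inv d i hr x) + d0Inv d i hs (dTo d 0 h₁' h₂ x) = x := by
  obtain hneg | hpos := hq.lt_or_gt
  · have := htriv q i (Or.inl hneg)
    exact Subsingleton.elim _ _
  rcases Int.emod_two_eq_zero_or_one q with he | ho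
  · rw [d0Inv_eq_zero _ (d0_eq_zero hd0 i (by omega)), map_zero, zero_add,
      d0Inv_dTo _ (d0_bijective hd0 i hpos he)]
  · rw [dTo_eq_zero (d0_eq_zero hd0 i (Or.inl ho)), map_zero, add_zero,
      dTo_d0Inv _ (d0_bijective hd0 i (by omega) (by omega))]

include htriv hd0 in
theorem vertD_contraction_add_contraction_vertD (c : ℤ) (y : TotalCB C (c + 1)) :
    vertD d (c + 1) (contraction d (c + 1) y) + contraction d c (vertD d c y) =
      y - incl (c + 1) (proj (c + 1) y) := by
  induction y using DirectSum.induction_on with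
  | zero => simp
  | add y z hy hz => simp only [map_add]; rw [add_add_add_comm, hy, hz]; abel
  | of i x =>
    rw [contraction_ofCol, vertD_ofCol, vertD_ofCol, contraction_ofCol, ← map_add]
    obtain hi | hi := eq_or_ne i (c + 1)
    · rw [incl_proj_ofCol hi, sub_self,
        d0Inv_eq_zero _ (d0_eq_zero hd0 (p := c + 1 + 1 - i) i (by omega)), map_zero, zero_add,
        dTo_eq_zero (d0_eq_zero hd0 (p := c + 1 - i) i (by omega)), map_zero, map_zero]
    · rw [proj_ofCol_of_ne hi, map_zero, dTo_d0Inv_add_d0Inv_dTo htriv hd0 (by omega), sub_zero]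

include htriv hrange hd0 in
theorem proj_totalD (c : ℤ) (y : TotalCB C (c + 1)) :
    proj c (totalD d m c y) = morseD d c (proj (c + 1) y) := by
  induction y using DirectSum.induction_on with
  | zero => simp
  | add y z hy hz => rw [map_add, map_add, hy, hz, map_add, map_add]
  | of i x =>
    rw [totalD_ofCol, map_sum, Finset.sum_eq_single (i - c)]
    · rw [proj_ofCol (show i - (i - c) = c by ring), castC_dTo]
      obtain hi | hi := eq_or_ne i (c + 1)
      · rw [proj_ofCol hi, morseD_eq_dTo]
        exact (dTo_castC (show i - c = 1 by omega) _ _ _ _ _ _ x).symm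
      rw [proj_ofCol_of_ne hi, map_zero]
      obtain hj | hj | hj : i - c < 0 ∨ i - c = 0 ∨ 1 < i - c := by omega
      · exact dTo_eq_zero (hrange _ _ _ (Or.inl hj)) _ _ x
      · exact dTo_eq_zero (by rw [hj]; exact d0_eq_zero hd0 i (by omega)) _ _ x
      · have := htriv (c + 1 - i) i (Or.inl (by omega))
        rw [Subsingleton.elim x 0, map_zero]
    · intro j _ hj
      exact proj_ofCol_of_ne (by omega) _
    · intro hj
      rw [Finset.mem_Icc] at hj
      rw [dTo_eq_zero (hrange _ _ _ (by omega)), map_zero, map_zero]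

include htriv in
theorem colFiltration_eq_top (a : ℤ) : colFiltration (C := C) a m = ⊤ := by
  refine eq_top_iff.mpr ?_
  rintro y -
  induction y using DirectSum.induction_on with
  | zero => exact zero_mem _
  | add y z hy hz => exact add_mem hy hz
  | of i x =>
    by_cases hi : i ≤ m
    · exact AddSubmonoid.subset_closure ⟨i, hi, x, rfl⟩
    · have := htriv (a - i) i (Or.inr (Or.inr (by omega)))
      rw [Subsingleton.elim x 0, map_zero]
      exact zero_mem _

include htriv in
theorem colFiltration_eq_bot {a s : ℤ} (hs : s < 0) : colFiltration (C := C) a s = ⊥ := by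
  refine eq_bot_iff.mpr (AddSubmonoid.closure_le.mpr ?_)
  rintro _ ⟨i, hi, x, rfl⟩
  have := htriv (a - i) i (Or.inr (Or.inl (by omega)))
  rw [Subsingleton.elim x 0, map_zero]
  exact zero_mem _

include htriv in
theorem isUnit_one_add_contractHoriz (c : ℤ) : IsUnit (1 + contractHoriz d m c) := by
  refine (AddMonoid.End.isNilpotent_of_filtration _ (fun n => colFiltration (c + 1) (m - n))
    (m.toNat + 1) ?_ (fun n => ?_) (colFiltration_eq_bot htriv (by omega))).isUnit_one_add
  · simpa using colFiltration_eq_top htriv (c + 1)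
  · simpa [sub_sub] using colFiltration_le_comap_contractHoriz (c := c) (m - n)

include htriv in
theorem inverse_add_contractHoriz (c : ℤ) (y : TotalCB C (c + 1)) :
    Ring.inverse (1 + contractHoriz d m c) y + contractHoriz d m c
      (Ring.inverse (1 + contractHoriz d m c) y) = y :=
  DFunLike.congr_fun (Ring.mul_inverse_cancel _ (isUnit_one_add_contractHoriz htriv c)) y

include htriv in
theorem eq_of_add_contractHoriz_eq {c : ℤ} {y z : TotalCB C (c + 1)}
    (h : y + contractHoriz d m c y = z + contractHoriz d m c z) : y = z := by
  have hinv := Ring.inverse_mul_cancel _ (isUnit_one_add_contractHoriz (d := d) htriv c)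
  calc y = Ring.inverse (1 + contractHoriz d m c) (y + contractHoriz d m c y) :=
        (DFunLike.congr_fun hinv y).symm
    _ = z := by rw [h]; exact DFunLike.congr_fun hinv z

include hd0 in
theorem contraction_eq_of_add_contractHoriz_eq {c : ℤ} {v z : TotalCB C (c + 1)}
    (h : v + contractHoriz d m c v = z) : contraction d (c + 1) v = contraction d (c + 1) z := by
  rw [← h, map_add, contractHoriz_apply, contraction_contraction hd0, add_zero]

include hd0 in
theorem proj_eq_of_add_contractHoriz_eq {c : ℤ} {v z : TotalCB C (c + 1)}
    (h : v + contractHoriz d m c v = z) : proj (c + 1) v = proj (c + 1) z := by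
  rw [← h, map_add, contractHoriz_apply, proj_contraction hd0, add_zero]

include htriv in
theorem perturbedIncl_add_contractHoriz (c : ℤ) (x : C 0 (c + 1)) :
    perturbedIncl d m c x + contractHoriz d m c (perturbedIncl d m c x) = incl (c + 1) x :=
  inverse_add_contractHoriz htriv c _

include htriv hd0 in
theorem proj_perturbedIncl (c : ℤ) (x : C 0 (c + 1)) :
    proj (c + 1) (perturbedIncl d m c x) = x := by
  rw [proj_eq_of_add_contractHoriz_eq hd0 (perturbedIncl_add_contractHoriz htriv c x), proj_incl]

include htriv hd0 in
theorem contraction_perturbedIncl (c : ℤ) (x : C 0 (c + 1)) :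
    contraction d (c + 1) (perturbedIncl d m c x) = 0 := by
  rw [contraction_eq_of_add_contractHoriz_eq hd0 (perturbedIncl_add_contractHoriz htriv c x),
    contraction_incl hd0]

include hm htriv hd0 in
theorem eq_perturbedIncl_proj_of_cycle {c : ℤ} {y : TotalCB C (c + 1)} (hy : totalD d m c y = 0)
    (hh : contraction d (c + 1) y = 0) : y = perturbedIncl d m c (proj (c + 1) y) := by
  refine eq_of_add_contractHoriz_eq (d := d) htriv ?_
  have hB : horizD d m c y = -vertD d c y := by
    rw [eq_neg_iff_add_eq_zero, add_comm, ← totalD_eq_vertD_add_horizD hm, hy]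
  have hA := vertD_contraction_add_contraction_vertD htriv hd0 c y
  rw [hh, map_zero, zero_add] at hA
  rw [perturbedIncl_add_contractHoriz htriv, contractHoriz_apply, hB, map_neg, hA]
  abel

include hm htriv hrange hrel hd0 in
theorem totalD_perturbedIncl (c : ℤ) (x : C 0 (c + 1 + 1)) :
    totalD d m (c + 1) (perturbedIncl d m (c + 1) x) = perturbedIncl d m c (morseD d (c + 1) x) := by
  set v := perturbedIncl d m (c + 1) x
  have hA := vertD_contraction_add_contraction_vertD htriv hd0 (c + 1) v
  rw [contraction_perturbedIncl htriv hd0, map_zero, zero_add, proj_perturbedIncl htriv hd0] at hA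
  have hB := perturbedIncl_add_contractHoriz (d := d) htriv (c + 1) x
  rw [contractHoriz_apply] at hB
  have hh : contraction d (c + 1) (totalD d m (c + 1) v) = 0 := by
    rw [totalD_eq_vertD_add_horizD hm, map_add, hA, ← hB]
    abel
  rw [eq_perturbedIncl_proj_of_cycle hm htriv hd0 (totalD_totalD hrange hrel c v) hh,
    proj_totalD htriv hrange hd0, proj_perturbedIncl htriv hd0]

include hm htriv hrange hrel hd0 in
theorem sub_perturbedIncl_proj_mem_range {c : ℤ} {x : TotalCB C (c + 1)}
    (hx : totalD d m c x = 0) :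
    x - perturbedIncl d m c (proj (c + 1) x) ∈ (totalD d m (c + 1)).range := by
  set u := Ring.inverse (1 + contractHoriz d m (c + 1)) (contraction d (c + 1) x)
  have hu : u + contractHoriz d m (c + 1) u = contraction d (c + 1) x :=
    inverse_add_contractHoriz htriv (c + 1) _
  have hhu : contraction d (c + 1 + 1) u = 0 := by
    rw [contraction_eq_of_add_contractHoriz_eq hd0 hu, contraction_contraction hd0]
  have hpu : proj (c + 1 + 1) u = 0 := by
    rw [proj_eq_of_add_contractHoriz_eq hd0 hu, proj_contraction hd0]
  have hAu := vertD_contraction_add_contraction_vertD htriv hd0 (c + 1) u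
  rw [hhu, hpu, map_zero, map_zero, zero_add, sub_zero] at hAu
  have hcycle : totalD d m c (x - totalD d m (c + 1) u) = 0 := by
    rw [map_sub, hx, totalD_totalD hrange hrel, sub_zero]
  have hh : contraction d (c + 1) (x - totalD d m (c + 1) u) = 0 := by
    rw [map_sub, totalD_eq_vertD_add_horizD hm, map_add, hAu, ← contractHoriz_apply, hu]
    abel
  have hp : proj (c + 1) (x - totalD d m (c + 1) u) = proj (c + 1) x := by
    rw [map_sub, proj_totalD htriv hrange hd0, hpu, map_zero, sub_zero]
  refine ⟨u, ?_⟩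
  rw [← hp, ← eq_perturbedIncl_proj_of_cycle hm htriv hd0 hcycle hh]
  abel

end MorseBott

open MorseBott

theorem morse_quasi_isomorphic_to_morseBott
    {C : ℤ → ℤ → Type u} [∀ p i, AddCommGroup (C p i)] (m : ℤ) (hm : 0 ≤ m)
    (htriv : ∀ p i : ℤ, (p < 0 ∨ i < 0 ∨ m < i) → Subsingleton (C p i))
    (d : ∀ j p i : ℤ, C p i →+ C (p + j - 1) (i - j))
    (hrange : ∀ j p i : ℤ, (j < 0 ∨ m < j) → d j p i = 0)
    (hrel : ∀ (j p i : ℤ) (x : C p i),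
      ∑ q ∈ Finset.Icc (0 : ℤ) j,
        castC (C := C) (by ring) (by ring)
          (d q (p + (j - q) - 1) (i - (j - q)) (d (j - q) p i x)) =
        (0 : C (p + j - 2) (i - j)))
    (hd0 : ∀ p i : ℤ,
      (0 < p ∧ Even p → Function.Bijective (d 0 p i)) ∧
      (¬(0 < p ∧ Even p) → d 0 p i = 0)) :
    ∀ k : ℤ, Nonempty (morseHomology d k ≃+ totalHomology m d k) := by
  intro k
  -- Writing `k = c + 1 + 1` puts the degrees `k - 1`, `k`, `k + 1` in the form `_ + 1`.
  obtain ⟨c, rfl⟩ : ∃ c, k = c + 1 + 1 := ⟨k - 2, by ring⟩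
  refine nonempty_addEquiv_homology_of_retract _ _ _ _ (perturbedIncl d m (c + 1))
    (proj (c + 1 + 1)) (fun x hx => ?_)
    (fun e => ⟨_, totalD_perturbedIncl hm htriv hrange hrel hd0 (c + 1) e⟩) (fun x hx => ?_)
    (fun y => ⟨_, (proj_totalD htriv hrange hd0 (c + 1 + 1) y).symm⟩)
    (proj_perturbedIncl htriv hd0 (c + 1))
    (fun x hx => sub_perturbedIncl_proj_mem_range hm htriv hrange hrel hd0
      ((totalD_eq_zero_iff _ x).mpr hx))
  · rw [← totalD_eq_zero_iff, totalD_perturbedIncl hm htriv hrange hrel hd0,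
      (morseD_eq_zero_iff _ x).mpr hx, map_zero]
  · rw [← morseD_eq_zero_iff, ← proj_totalD htriv hrange hd0, (totalD_eq_zero_iff _ x).mpr hx,
      map_zero]
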